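/- For c = 0.189, the inequality (1 − d)·(H((c − d)/(1 − d)) − 1) + H(d) ≤ 0 holds for all d ∈ (0, c], where H is the binary entropy function. -/

import Mathlib

/-! In nats, the grouping rule for entropy turns the left-hand side into
`(H₃(d, c - d, 1 - c) - (1 - d) log 2) / log 2`, where `H₃` is the entropy of a three-point
distribution. Weighting the atom `d` by `2`, the tangent-line bound `-x log x ≤ a - x - x log a`
gives `-(c - d) log (c - d) - d log d + d log 2 ≤ c log (3 / c)` uniformly in `d`, so it remains
to check the numerical inequality `c log (3 / c) - (1 - c) log (1 - c) ≤ log 2` at `c = 0.189`. -/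

/-- Binary entropy function (base-2). -/
noncomputable def binEnt (t : ℝ) : ℝ :=
  -t * Real.logb 2 t - (1 - t) * Real.logb 2 (1 - t)

open Real

lemma binEnt_eq_binEntropy_div_log_two (t : ℝ) : binEnt t = binEntropy t / log 2 := by
  rw [binEnt, binEntropy_eq_negMulLog_add_negMulLog_one_sub, negMulLog, negMulLog, logb, logb]
  ring

lemma mul_negMulLog_div {s : ℝ} (hs : s ≠ 0) (x : ℝ) :
    s * negMulLog (x / s) = negMulLog x + x * log s := by
  rw [div_eq_mul_inv, negMulLog_mul]
  simp only [negMulLog, log_inv]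
  field_simp

lemma binEntropy_grouping {c d : ℝ} (hd : d ≠ 1) :
    (1 - d) * binEntropy ((c - d) / (1 - d)) + binEntropy d =
      negMulLog d + negMulLog (c - d) + negMulLog (1 - c) := by
  have hd' : 1 - d ≠ 0 := sub_ne_zero.mpr hd.symm
  have hcompl : 1 - (c - d) / (1 - d) = (1 - c) / (1 - d) := by field_simp; ring
  simp only [binEntropy_eq_negMulLog_add_negMulLog_one_sub, hcompl, mul_add,
    mul_negMulLog_div hd']
  simp only [negMulLog]
  ring

lemma negMulLog_le_sub_sub_mul_log {x a : ℝ} (hx : 0 ≤ x) (ha : 0 < a) :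
    negMulLog x ≤ a - x - x * log a := by
  rcases hx.eq_or_lt with rfl | hx
  · simpa using ha.le
  · have h := mul_le_mul_of_nonneg_left (log_le_sub_one_of_pos (div_pos ha hx)) hx.le
    rw [log_div ha.ne' hx.ne', mul_sub, mul_sub, mul_div_cancel₀ _ hx.ne'] at h
    rw [negMulLog]
    linarith

lemma negMulLog_add_negMulLog_add_mul_log_two_le {x y : ℝ} (hx : 0 ≤ x) (hy : 0 ≤ y)
    (hxy : 0 < x + y) :
    negMulLog x + negMulLog y + y * log 2 ≤ (x + y) * log (3 / (x + y)) := by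
  -- equality holds at `x = a`, `y = 2a`
  set a := (x + y) / 3
  have ha : 0 < a := by positivity
  have hxa := negMulLog_le_sub_sub_mul_log hx ha
  have hya := negMulLog_le_sub_sub_mul_log hy (by positivity : 0 < 2 * a)
  rw [log_mul two_ne_zero ha.ne'] at hya
  rw [show 3 / (x + y) = a⁻¹ by simp [a], log_inv]
  have h3a : 3 * a = x + y := by simp only [a]; ring
  linarith

lemma mul_log_add_negMulLog_le_log_two :
    189 / 1000 * log (1000 / 63) + negMulLog (811 / 1000) ≤ log 2 := by
  have hlog2 := log_two_lt_d9
  have h126 : 1 / 126 ≤ log (126 / 125) := by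
    have h := log_le_sub_one_of_pos (show (0 : ℝ) < 125 / 126 by norm_num)
    rw [show (125 / 126 : ℝ) = (126 / 125)⁻¹ by norm_num, log_inv] at h
    linarith
  have h63 : log (1000 / 63) = 4 * log 2 - log (126 / 125) := by
    rw [show (1000 / 63 : ℝ) = 2 ^ 4 / (126 / 125) by norm_num,
      log_div (by norm_num) (by norm_num), log_pow]
    push_cast
    ring
  have h811 := log_nonneg (show (1 : ℝ) ≤ (811 / 1000) ^ 43 * 2 ^ 13 by norm_num)
  rw [log_mul (by positivity) (by positivity), log_pow, log_pow] at h811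
  push_cast at h811
  rw [h63, negMulLog]
  linarith

theorem entropy_condition_general :
    ∀ d : ℝ, 0 < d → d ≤ (189/1000 : ℝ) →
      (1 - d) * (binEnt (((189/1000 : ℝ) - d) / (1 - d)) - 1) + binEnt d ≤ 0 := by
  intro d hd hdc
  have hlog2 : 0 < log 2 := log_pos one_lt_two
  have hgroup := binEntropy_grouping (c := 189 / 1000) (by linarith : d < 1).ne
  rw [show (1 : ℝ) - 189 / 1000 = 811 / 1000 by norm_num] at hgroup
  have hbound := negMulLog_add_negMulLog_add_mul_log_two_le (sub_nonneg.mpr hdc) hd.le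
    (by linarith : 0 < 189 / 1000 - d + d)
  rw [sub_add_cancel, show (3 : ℝ) / (189 / 1000) = 1000 / 63 by norm_num] at hbound
  have hnum := mul_log_add_negMulLog_le_log_two
  rw [binEnt_eq_binEntropy_div_log_two, binEnt_eq_binEntropy_div_log_two, div_sub_one hlog2.ne',
    ← mul_div_assoc, ← add_div]
  exact div_nonpos_of_nonpos_of_nonneg (by linarith) hlog2.le
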